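/- Let {G_α} be a family of profinite groups with pairwise disjoint sets Quo(G_α) of finite nonabelian simple quotients, and let G = ∏ G_α. If H is a maximal closed subgroup of G, then either (i) π_α(H) is a maximal closed subgroup of G_α for some α, in which case H = π_α⁻¹(π_α(H)), or (ii) π_α(H) = G_α for all α, in which case H contains the closed commutator subgroup G' and the image of H in G^ab is a maximal closed subgroup. -/

import Mathlib

/-- A maximal closed subgroup: a proper closed subgroup not properly contained in
any other proper closed subgroup. -/
def IsMaximalClosedSubgroup {G : Type*} [Group G] [TopologicalSpace G]
    (M : Subgroup G) : Prop :=
  IsClosed (M : Set G) ∧ M ≠ ⊤ ∧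
    ∀ K : Subgroup G, IsClosed (K : Set G) → K ≠ ⊤ → M ≤ K → K = M

/-!
If some projection `π_i H` is proper, it is closed (a compact image), so `π_i⁻¹(π_i H)` is a proper
closed subgroup containing `H`, hence equal to it, and maximality passes along the surjection `π_i`.

Otherwise all projections are onto. A maximal closed subgroup of a profinite group is open, so `H`
contains every element that is trivial on some finite set `F` of coordinates, and it suffices to
show that `H` contains each `⁅a, b⁆` placed in a single coordinate `i`. If it does not,
`K = {g | mulSingle i g ∈ H}` is open and normal, `G_i ⧸ K` is finite, nonabelian, and simple by
maximality of `H`. As `G = H · G_i`, the map `h ↦ h_i K` extends to a surjection `G → G_i ⧸ K`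
killing `G_i` and everything trivial on `F ∪ {i}`, so some other factor `G_j` already maps onto
`G_i ⧸ K`: a common finite nonabelian simple quotient of `G_i` and `G_j`.
Then `G'` lies in `H`, and maximality passes along `G → G ⧸ \overline{G'}` as in the first case.
-/

open Subgroup
open scoped commutatorElement

theorem MonoidHom.continuous_of_isOpen_ker {G Q : Type*} [Group G] [TopologicalSpace G]
    [IsTopologicalGroup G] [Group Q] [TopologicalSpace Q] [DiscreteTopology Q] (f : G →* Q)
    (hf : IsOpen (f.ker : Set G)) : Continuous f :=
  continuous_of_continuousAt_one f <| by
    rw [ContinuousAt, nhds_discrete Q, map_one, Filter.tendsto_pure]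
    exact hf.mem_nhds (one_mem f.ker)

/-- `φ` factors through `H ⧸ (H ⊓ N) ≃* G ⧸ N`. -/
theorem MonoidHom.exists_extend_of_sup_eq_top {G Q : Type*} [Group G] [Group Q]
    {H N : Subgroup G} [N.Normal] (hHN : H ⊔ N = ⊤) (φ : H →* Q) (hφ : N.subgroupOf H ≤ φ.ker) :
    ∃ Φ : G →* Q, (∀ h : H, Φ h = φ h) ∧ N ≤ Φ.ker := by
  set ψ : H →* G ⧸ N := (QuotientGroup.mk' N).comp H.subtype
  have hψ : Function.Surjective ψ := by
    intro q
    obtain ⟨g, rfl⟩ := QuotientGroup.mk'_surjective N q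
    have hg : g ∈ (H ⊔ N : Subgroup G) := hHN ▸ mem_top g
    rw [← SetLike.mem_coe, mul_normal] at hg
    obtain ⟨h, hh, n, hn, rfl⟩ := hg
    exact ⟨⟨h, hh⟩, (QuotientGroup.mk_mul_of_mem h hn).symm⟩
  have hker : ψ.ker = N.subgroupOf H := by
    ext h
    simp [ψ, mem_subgroupOf]
  let e := QuotientGroup.quotientKerEquivOfSurjective ψ hψ
  refine ⟨(QuotientGroup.lift ψ.ker φ (hker.le.trans hφ)).comp
    (e.symm.toMonoidHom.comp (QuotientGroup.mk' N)), fun h => ?_, fun n hn => ?_⟩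
  · have he : e.symm (QuotientGroup.mk' N h) = (h : H ⧸ ψ.ker) := e.symm_apply_eq.mpr rfl
    change QuotientGroup.lift _ φ (hker.le.trans hφ) (e.symm (QuotientGroup.mk' N h)) = φ h
    rw [he]
    rfl
  · change QuotientGroup.lift _ φ (hker.le.trans hφ) (e.symm (n : G ⧸ N)) = 1
    rw [(QuotientGroup.eq_one_iff n).mpr hn, map_one, map_one]

theorem QuotientGroup.isSimpleGroup_of_forall_normal_le {G : Type*} [Group G] {K : Subgroup G}
    [K.Normal] (hK : K ≠ ⊤) (h : ∀ N : Subgroup G, N.Normal → K ≤ N → N = K ∨ N = ⊤) :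
    IsSimpleGroup (G ⧸ K) := by
  have : Nontrivial (G ⧸ K) := QuotientGroup.nontrivial_iff.mpr hK
  refine ⟨fun N hN => ?_⟩
  have hKN : K ≤ N.comap (QuotientGroup.mk' K) := fun k hk => by
    simp [(QuotientGroup.eq_one_iff k).mpr hk]
  rw [← map_comap_eq_self_of_surjective (QuotientGroup.mk'_surjective K) N]
  rcases h _ (hN.comap _) hKN with h | h <;> rw [h]
  · exact Or.inl (by rw [Subgroup.map_eq_bot_iff, QuotientGroup.ker_mk'])
  · exact Or.inr (map_top_of_surjective _ (QuotientGroup.mk'_surjective K))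

/-- `hAB` only speaks about quotients in `Type`; `Q` is moved there through `Shrink`. -/
theorem false_of_common_finite_simple_quotient {A B : Type*} [Group A] [TopologicalSpace A]
    [Group B] [TopologicalSpace B]
    (hAB : ∀ (S : Type) [Group S] [Finite S] [TopologicalSpace S] [DiscreteTopology S],
      IsSimpleGroup S → (¬ ∀ a b : S, a * b = b * a) →
      ¬ ((∃ f : A →* S, Continuous f ∧ Function.Surjective f) ∧
         (∃ f : B →* S, Continuous f ∧ Function.Surjective f)))
    {Q : Type*} [Group Q] [Finite Q] [TopologicalSpace Q] [DiscreteTopology Q] [IsSimpleGroup Q]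
    (hQ : ¬ ∀ a b : Q, a * b = b * a) {f : A →* Q} (hf : Continuous f)
    (hfs : Function.Surjective f) {g : B →* Q} (hg : Continuous g) (hgs : Function.Surjective g) :
    False := by
  let e : Shrink.{0} Q ≃* Q := Shrink.mulEquiv
  let : TopologicalSpace (Shrink.{0} Q) := ⊥
  have : DiscreteTopology (Shrink.{0} Q) := ⟨rfl⟩
  have hS : ¬ ∀ a b : Shrink.{0} Q, a * b = b * a := fun hcomm =>
    hQ fun a b => e.symm.injective (by simp [hcomm])
  exact hAB _ e.isSimpleGroup hS
    ⟨⟨e.symm.toMonoidHom.comp f, (continuous_of_discreteTopology (f := e.symm)).comp hf,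
        e.symm.surjective.comp hfs⟩,
      ⟨e.symm.toMonoidHom.comp g, (continuous_of_discreteTopology (f := e.symm)).comp hg,
        e.symm.surjective.comp hgs⟩⟩

namespace IsMaximalClosedSubgroup

variable {G : Type*} [Group G] [TopologicalSpace G] {H : Subgroup G}

theorem comap_eq_of_map_le {G₂ : Type*} [Group G₂] [TopologicalSpace G₂]
    (hH : IsMaximalClosedSubgroup H) {f : G →* G₂} (hf : Continuous f)
    (hfs : Function.Surjective f) {K : Subgroup G₂} (hK : IsClosed (K : Set G₂)) (hKtop : K ≠ ⊤)
    (hHK : H.map f ≤ K) : K.comap f = H :=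
  hH.2.2 _ (hK.preimage hf)
    (fun h => hKtop <| by
      rw [← map_comap_eq_self_of_surjective hfs K, h, map_top_of_surjective f hfs])
    (map_le_iff_le_comap.mp hHK)

theorem map_of_surjective {G₂ : Type*} [Group G₂] [TopologicalSpace G₂]
    (hH : IsMaximalClosedSubgroup H) {f : G →* G₂} (hf : Continuous f)
    (hfs : Function.Surjective f) (hcl : IsClosed (H.map f : Set G₂)) (hne : H.map f ≠ ⊤) :
    IsMaximalClosedSubgroup (H.map f) ∧ H = (H.map f).comap f := by
  refine ⟨⟨hcl, hne, fun K hK hKtop hHK => ?_⟩, (hH.comap_eq_of_map_le hf hfs hcl hne le_rfl).symm⟩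
  rw [← map_comap_eq_self_of_surjective hfs K, hH.comap_eq_of_map_le hf hfs hK hKtop hHK]

theorem isOpen [IsTopologicalGroup G] [CompactSpace G] [TotallyDisconnectedSpace G]
    (hH : IsMaximalClosedSubgroup H) : IsOpen (H : Set G) := by
  obtain ⟨N, ⟨hNopen, hHN⟩, hNtop⟩ :
      ∃ N ∈ {N : Subgroup G | IsOpen (N : Set G) ∧ H ≤ N}, N ≠ ⊤ := by
    by_contra! h
    exact hH.2.1 ((ProfiniteGrp.closedSubgroup_eq_sInf_open ⟨H, hH.1⟩).trans (sInf_eq_top.mpr h))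
  rw [← hH.2.2 N (N.isClosed_of_isOpen hNopen) hNtop hHN]
  exact hNopen

theorem le_or_sup_eq_top [ContinuousMul G] [CompactSpace G] [T2Space G]
    (hH : IsMaximalClosedSubgroup H) {M : Subgroup G} [M.Normal] (hM : IsClosed (M : Set G)) :
    M ≤ H ∨ H ⊔ M = ⊤ := by
  have hcl : IsClosed ((H ⊔ M : Subgroup G) : Set G) := by
    rw [mul_normal]
    exact (hH.1.isCompact.mul hM.isCompact).isClosed
  by_cases htop : H ⊔ M = ⊤
  · exact Or.inr htop
  · exact Or.inl (hH.2.2 _ hcl htop le_sup_left ▸ le_sup_right)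

end IsMaximalClosedSubgroup

section Pi

variable {ι : Type*} {G : ι → Type*}

theorem exists_finset_forall_eq_one_mem_of_isOpen [∀ i, One (G i)] [∀ i, TopologicalSpace (G i)]
    {U : Set (∀ i, G i)} (hU : IsOpen U) (h1 : 1 ∈ U) :
    ∃ F : Finset ι, ∀ x : ∀ i, G i, (∀ j ∈ F, x j = 1) → x ∈ U := by
  obtain ⟨F, u, hu, hFu⟩ := isOpen_pi_iff.mp hU 1 h1
  exact ⟨F, fun x hx => hFu fun j hj => (hx j hj).symm ▸ (hu j hj).2⟩

variable [∀ i, Group (G i)] [DecidableEq ι]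

theorem mem_of_forall_eq_one_mem_of_mulSingle_mem {L : Subgroup (∀ i, G i)} {F : Finset ι}
    (hF : ∀ x : ∀ i, G i, (∀ j ∈ F, x j = 1) → x ∈ L) (z : ∀ i, G i)
    (hz : ∀ j ∈ F, Pi.mulSingle j (z j) ∈ L) : z ∈ L := by
  have hsplit : z = (fun j => if j ∈ F then z j else 1) * fun j => if j ∈ F then 1 else z j := by
    funext j
    by_cases hj : j ∈ F <;> simp [hj]
  rw [hsplit]
  refine mul_mem (Submonoid.pi_mem_of_mulSingle_mem_aux F _ (fun j hj => if_neg hj)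
    fun j hj => ?_) (hF _ fun j hj => if_pos hj)
  simpa [hj] using hz j hj

theorem Pi.mulSingle_conj (g : ∀ i, G i) (i : ι) (a : G i) :
    g * Pi.mulSingle i a * g⁻¹ = Pi.mulSingle i (g i * a * (g i)⁻¹) := by
  funext j
  by_cases hj : j = i
  · subst hj
    simp
  · simp [Pi.mulSingle_eq_of_ne hj]

theorem Subgroup.Normal.map_mulSingle {i : ι} {N : Subgroup (G i)} (hN : N.Normal) :
    (N.map (MonoidHom.mulSingle G i)).Normal := by
  refine ⟨?_⟩
  rintro _ ⟨n, hn, rfl⟩ g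
  exact ⟨g i * n * (g i)⁻¹, hN.conj_mem n hn (g i), (Pi.mulSingle_conj g i n).symm⟩

instance MonoidHom.normal_range_mulSingle (i : ι) : (MonoidHom.mulSingle G i).range.Normal := by
  rw [MonoidHom.range_eq_map]
  exact normal_top.map_mulSingle

theorem normal_comap_mulSingle_of_map_eq_top {H : Subgroup (∀ i, G i)} {i : ι}
    (hH : H.map (Pi.evalMonoidHom G i) = ⊤) : (H.comap (MonoidHom.mulSingle G i)).Normal := by
  refine ⟨fun n hn g => ?_⟩
  obtain ⟨h, hh, rfl⟩ : g ∈ H.map (Pi.evalMonoidHom G i) := hH ▸ mem_top g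
  change Pi.mulSingle i (h i * n * (h i)⁻¹) ∈ H
  rw [← Pi.mulSingle_conj]
  exact mul_mem (mul_mem hh hn) (inv_mem hh)

/-- The image of each factor is normal, hence trivial or everything; if all were trivial, `Φ` would
be trivial. -/
theorem exists_mem_surjective_comp_mulSingle {Q : Type*} [Group Q] [IsSimpleGroup Q]
    {Φ : (∀ i, G i) →* Q} (hΦ : Function.Surjective Φ) {F : Finset ι}
    (hF : ∀ x : ∀ i, G i, (∀ j ∈ F, x j = 1) → Φ x = 1) :
    ∃ j ∈ F, Function.Surjective (Φ.comp (MonoidHom.mulSingle G j)) := by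
  by_contra! h
  have hfactor : ∀ j ∈ F, ∀ g, Φ (Pi.mulSingle j g) = 1 := by
    intro j hj g
    have hnormal : (Φ.comp (MonoidHom.mulSingle G j)).range.Normal := by
      rw [MonoidHom.range_comp]
      exact (MonoidHom.normal_range_mulSingle j).map Φ hΦ
    rcases hnormal.eq_bot_or_eq_top with hbot | htop
    · exact DFunLike.congr_fun (MonoidHom.range_eq_bot_iff.mp hbot) g
    · exact absurd (MonoidHom.range_eq_top.mp htop) (h j hj)
  have hker : ∀ z, Φ z = 1 := fun z =>
    mem_of_forall_eq_one_mem_of_mulSingle_mem (L := Φ.ker) hF z fun j hj => hfactor j hj (z j)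
  obtain ⟨q, hq⟩ := exists_ne (1 : Q)
  obtain ⟨x, rfl⟩ := hΦ q
  exact hq (hker x)

theorem exists_extend_quotient_comap_mulSingle {H : Subgroup (∀ i, G i)} {i : ι}
    [(H.comap (MonoidHom.mulSingle G i)).Normal]
    (hHA : H ⊔ (MonoidHom.mulSingle G i).range = ⊤) :
    ∃ Φ : (∀ j, G j) →* G i ⧸ H.comap (MonoidHom.mulSingle G i),
      (∀ h ∈ H, Φ h = h i) ∧ ∀ g, Φ (Pi.mulSingle i g) = 1 := by
  obtain ⟨Φ, hΦH, hΦA⟩ := MonoidHom.exists_extend_of_sup_eq_top hHA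
    ((QuotientGroup.mk' (H.comap (MonoidHom.mulSingle G i))).comp
      ((Pi.evalMonoidHom G i).comp H.subtype)) <| by
      rintro ⟨h, hh⟩ ⟨g, hg⟩
      have hg' : Pi.mulSingle i g = h := hg
      subst hg'
      rw [MonoidHom.mem_ker]
      change QuotientGroup.mk' (H.comap (MonoidHom.mulSingle G i)) (Pi.mulSingle i g i) = 1
      rw [Pi.mulSingle_eq_same, QuotientGroup.mk'_apply, QuotientGroup.eq_one_iff]
      exact hh
  exact ⟨Φ, fun h hh => hΦH ⟨h, hh⟩, fun g => hΦA ⟨g, rfl⟩⟩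

end Pi

section ProfiniteProduct

variable {ι : Type*} {G : ι → Type*} [∀ i, Group (G i)] [DecidableEq ι]
  [∀ i, TopologicalSpace (G i)] [∀ i, IsTopologicalGroup (G i)] [∀ i, CompactSpace (G i)]
  [∀ i, T2Space (G i)]

/-- `N` placed in the `i`-th factor is closed and normal, so it lies in `H` or `H ⊔ N = ⊤`; in the
second case `mulSingle i g = h * mulSingle i n` with `h ∈ H` forces `g * n⁻¹ ∈ N`. -/
theorem IsMaximalClosedSubgroup.eq_or_eq_top_of_comap_mulSingle_le
    {H : Subgroup (∀ i, G i)} (hH : IsMaximalClosedSubgroup H) {i : ι} {N : Subgroup (G i)}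
    [N.Normal] (hN : IsClosed (N : Set (G i))) (hKN : H.comap (MonoidHom.mulSingle G i) ≤ N) :
    N = H.comap (MonoidHom.mulSingle G i) ∨ N = ⊤ := by
  have : (N.map (MonoidHom.mulSingle G i)).Normal := ‹N.Normal›.map_mulSingle
  have hMcl : IsClosed ((N.map (MonoidHom.mulSingle G i) : Subgroup _) : Set (∀ j, G j)) :=
    (hN.isCompact.image (continuous_mulSingle i)).isClosed
  rcases hH.le_or_sup_eq_top hMcl with hle | htop
  · exact Or.inl (le_antisymm (map_le_iff_le_comap.mp hle) hKN)
  · refine Or.inr ((eq_top_iff' N).mpr fun g => ?_)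
    have hg : Pi.mulSingle i g ∈ (H ⊔ N.map (MonoidHom.mulSingle G i) : Subgroup _) :=
      htop ▸ mem_top _
    rw [← SetLike.mem_coe, mul_normal] at hg
    obtain ⟨h, hh, _, ⟨n, hn, rfl⟩, hhn⟩ := hg
    have hh' : h = Pi.mulSingle i (g * n⁻¹) := by
      rw [Pi.mulSingle_mul, Pi.mulSingle_inv, ← hhn]
      simp
    have hgn : g * n⁻¹ ∈ N := hKN (show Pi.mulSingle i (g * n⁻¹) ∈ H from hh' ▸ hh)
    simpa using mul_mem hgn hn

theorem IsMaximalClosedSubgroup.exists_ne_continuous_surjective_quotient_comap_mulSingle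
    [∀ i, TotallyDisconnectedSpace (G i)] {H : Subgroup (∀ i, G i)}
    (hH : IsMaximalClosedSubgroup H) {i : ι} (hsurj : H.map (Pi.evalMonoidHom G i) = ⊤)
    [(H.comap (MonoidHom.mulSingle G i)).Normal]
    [IsSimpleGroup (G i ⧸ H.comap (MonoidHom.mulSingle G i))] :
    ∃ j ≠ i, ∃ f : G j →* G i ⧸ H.comap (MonoidHom.mulSingle G i),
      Continuous f ∧ Function.Surjective f := by
  set K := H.comap (MonoidHom.mulSingle G i)
  have hopen := hH.isOpen
  obtain ⟨F, hF⟩ := exists_finset_forall_eq_one_mem_of_isOpen hopen (one_mem H)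
  have hKopen : IsOpen (K : Set (G i)) := hopen.preimage (continuous_mulSingle i)
  have := QuotientGroup.discreteTopology hKopen
  have hHA : H ⊔ (MonoidHom.mulSingle G i).range = ⊤ :=
    (hH.le_or_sup_eq_top (by
      rw [MonoidHom.range_eq_map, coe_map, coe_top]
      exact (isCompact_univ.image (continuous_mulSingle i)).isClosed)).resolve_left
      fun hle => QuotientGroup.nontrivial_iff.mp inferInstance
        ((eq_top_iff' K).mpr fun g => hle ⟨g, rfl⟩)
  obtain ⟨Φ, hΦH, hΦi⟩ := exists_extend_quotient_comap_mulSingle hHA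
  have hΦ : Function.Surjective Φ := by
    rintro ⟨c⟩
    obtain ⟨h, hh, rfl⟩ : c ∈ H.map (Pi.evalMonoidHom G i) := hsurj ▸ mem_top c
    exact ⟨h, hΦH h hh⟩
  obtain ⟨j, -, hj⟩ := exists_mem_surjective_comp_mulSingle hΦ (F := insert i F) fun x hx => by
    rw [hΦH x (hF x fun j hj => hx j (Finset.mem_insert_of_mem hj)),
      hx i (Finset.mem_insert_self i F), QuotientGroup.mk_one]
  have hji : j ≠ i := by
    rintro rfl
    obtain ⟨q, hq⟩ := exists_ne (1 : G j ⧸ K)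
    obtain ⟨g, rfl⟩ := hj q
    exact hq (hΦi g)
  refine ⟨j, hji, Φ.comp (MonoidHom.mulSingle G j), MonoidHom.continuous_of_isOpen_ker _
    (isOpen_mono (H₁ := H.comap (MonoidHom.mulSingle G j)) (fun g hg => ?_)
      (hopen.preimage (continuous_mulSingle j))), hj⟩
  rw [MonoidHom.mem_ker, MonoidHom.comp_apply, hΦH _ hg]
  simp [Pi.mulSingle_eq_of_ne hji.symm]

theorem IsMaximalClosedSubgroup.mulSingle_commutatorElement_mem
    [∀ i, TotallyDisconnectedSpace (G i)]
    (hdisj : ∀ i j, i ≠ j →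
      ∀ (S : Type) [Group S] [Finite S] [TopologicalSpace S] [DiscreteTopology S],
        IsSimpleGroup S → (¬ ∀ a b : S, a * b = b * a) →
        ¬ ((∃ f : G i →* S, Continuous f ∧ Function.Surjective f) ∧
           (∃ f : G j →* S, Continuous f ∧ Function.Surjective f)))
    {H : Subgroup (∀ i, G i)} (hH : IsMaximalClosedSubgroup H) {i : ι}
    (hsurj : H.map (Pi.evalMonoidHom G i) = ⊤) (a b : G i) :
    Pi.mulSingle i ⁅a, b⁆ ∈ H := by
  set K := H.comap (MonoidHom.mulSingle G i)
  change ⁅a, b⁆ ∈ K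
  by_contra habK
  have : K.Normal := normal_comap_mulSingle_of_map_eq_top hsurj
  have hKopen : IsOpen (K : Set (G i)) := hH.isOpen.preimage (continuous_mulSingle i)
  have := QuotientGroup.discreteTopology hKopen
  have := K.quotient_finite_of_isOpen hKopen
  have : IsSimpleGroup (G i ⧸ K) :=
    QuotientGroup.isSimpleGroup_of_forall_normal_le (fun h => habK (h ▸ mem_top ⁅a, b⁆))
      fun N _ hKN => hH.eq_or_eq_top_of_comap_mulSingle_le
        (N.isClosed_of_isOpen (isOpen_mono hKN hKopen)) hKN
  have hnab : ¬ ∀ p q : G i ⧸ K, p * q = q * p := fun hcomm => habK <| by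
    rw [← QuotientGroup.eq_one_iff (N := K), ← QuotientGroup.mk'_apply, map_commutatorElement,
      commutatorElement_eq_one_iff_mul_comm]
    exact hcomm _ _
  obtain ⟨j, hji, f, hf, hfs⟩ :=
    hH.exists_ne_continuous_surjective_quotient_comap_mulSingle hsurj
  exact false_of_common_finite_simple_quotient (hdisj i j hji.symm) hnab
    QuotientGroup.continuous_mk (QuotientGroup.mk'_surjective K) hf hfs

end ProfiniteProduct

/-- Classification of maximal closed subgroups of a product of profinite groups with
pairwise disjoint sets of finite nonabelian simple quotients: either `H` is the pullback
of a maximal closed subgroup of one factor, or `H` surjects onto every factor, contains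
the closed commutator subgroup, and its image in the abelianization is maximal. -/
theorem maximal_closed_subgroup_of_pi
    {ι : Type*} (G : ι → Type*) [∀ i, Group (G i)] [∀ i, TopologicalSpace (G i)]
    [∀ i, IsTopologicalGroup (G i)] [∀ i, CompactSpace (G i)] [∀ i, T2Space (G i)]
    [∀ i, TotallyDisconnectedSpace (G i)]
    (hdisj : ∀ i j, i ≠ j →
      ∀ (S : Type) [Group S] [Finite S] [TopologicalSpace S] [DiscreteTopology S],
        IsSimpleGroup S → (¬ ∀ a b : S, a * b = b * a) →
        ¬ ((∃ f : G i →* S, Continuous f ∧ Function.Surjective f) ∧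
           (∃ f : G j →* S, Continuous f ∧ Function.Surjective f)))
    (H : Subgroup (∀ i, G i)) (hmax : IsMaximalClosedSubgroup H) :
    (∃ i, IsMaximalClosedSubgroup (H.map (Pi.evalMonoidHom G i)) ∧
        H = Subgroup.comap (Pi.evalMonoidHom G i) (H.map (Pi.evalMonoidHom G i))) ∨
    ((∀ i, H.map (Pi.evalMonoidHom G i) = ⊤) ∧
      (commutator (∀ i, G i)).topologicalClosure ≤ H ∧
      IsMaximalClosedSubgroup
        (H.map (QuotientGroup.mk' (commutator (∀ i, G i)).topologicalClosure))) := by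
  classical
  by_cases hall : ∀ i, H.map (Pi.evalMonoidHom G i) = ⊤
  · set N := (commutator (∀ i, G i)).topologicalClosure
    have hcomm : commutator (∀ i, G i) ≤ H := by
      obtain ⟨F, hF⟩ := exists_finset_forall_eq_one_mem_of_isOpen hmax.isOpen (one_mem H)
      rw [commutator_def, commutator_le]
      exact fun x _ y _ => mem_of_forall_eq_one_mem_of_mulSingle_mem hF _ fun j _ =>
        hmax.mulSingle_commutatorElement_mem hdisj (hall j) (x j) (y j)
    have hNH : N ≤ H := topologicalClosure_minimal _ hcomm hmax.1
    have hne : H.map (QuotientGroup.mk' N) ≠ ⊤ := fun htop => hmax.2.1 <| by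
      rw [← comap_map_eq_self (H := H) (f := QuotientGroup.mk' N)
        (by rwa [QuotientGroup.ker_mk']), htop, comap_top]
    have : IsClosed (N : Set (∀ i, G i)) := isClosed_topologicalClosure _
    exact Or.inr ⟨hall, hNH, (hmax.map_of_surjective QuotientGroup.continuous_mk
      (QuotientGroup.mk'_surjective N) (hmax.1.isCompact.image QuotientGroup.continuous_mk).isClosed
      hne).1⟩
  · push Not at hall
    obtain ⟨i, hi⟩ := hall
    exact Or.inl ⟨i, hmax.map_of_surjective (continuous_apply i)
      (fun a => ⟨Pi.mulSingle i a, Pi.mulSingle_eq_same i a⟩)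
      (hmax.1.isCompact.image (continuous_apply i)).isClosed hi⟩
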